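/- Let q > 0, q ≠ 1, and let a,b,c,d be nonzero complex numbers. Define φ(x) = 2(abcd+1)x² − (abc+abd+acd+bcd+a+b+c+d)x + ab+ac+ad+bc+bd+cd−abcd−1 and ψ(x) = (abcd−1)·4√q·x/(q−1) + (a+b+c+d−abc−abd−acd−bcd)·2√q/(q−1), and set α = (q^{1/2}+q^{−1/2})/2 and U₂(x) = (α²−1)(x²−1). Then the polynomial identity φ(x)² − U₂(x)·ψ(x)² = 16abcd·(x − (a+a^{−1})/2)(x − (b+b^{−1})/2)(x − (c+c^{−1})/2)(x − (d+d^{−1})/2) holds. -/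

import Mathlib

set_option autoImplicit false
set_option maxHeartbeats 2000000

theorem stmt16 (q : ℝ) (hq0 : 0 < q) (hq1 : q ≠ 1)
    (a b c d : ℂ) (ha : a ≠ 0) (hb : b ≠ 0) (hc : c ≠ 0) (hd : d ≠ 0) :
    ∀ x : ℂ,
      (2 * (a * b * c * d + 1) * x ^ 2 -
          (a * b * c + a * b * d + a * c * d + b * c * d + a + b + c + d) * x +
          (a * b + a * c + a * d + b * c + b * d + c * d - a * b * c * d - 1)) ^ 2 -
        ((((Real.sqrt q : ℂ) + ((Real.sqrt q : ℂ))⁻¹) / 2) ^ 2 - 1) * (x ^ 2 - 1) *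
          ((a * b * c * d - 1) * 4 * (Real.sqrt q : ℂ) * x / ((q : ℂ) - 1) +
            (a + b + c + d - a * b * c - a * b * d - a * c * d - b * c * d) * 2 *
              (Real.sqrt q : ℂ) / ((q : ℂ) - 1)) ^ 2 =
      16 * a * b * c * d * (x - (a + a⁻¹) / 2) * (x - (b + b⁻¹) / 2) * (x - (c + c⁻¹) / 2) *
        (x - (d + d⁻¹) / 2) := by
  intro x
  set s : ℂ := (Real.sqrt q : ℂ) with hs
  have hs2 : s ^ 2 = (q : ℂ) := by
    rw [hs]
    norm_cast
    rw [sq]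
    exact Real.mul_self_sqrt hq0.le
  have hsne : s ≠ 0 := by
    rw [hs]
    norm_cast
    exact Real.sqrt_ne_zero'.mpr hq0
  have hq : (q : ℂ) - 1 ≠ 0 := by
    intro h
    apply hq1
    have : (q : ℂ) = 1 := by linear_combination h
    exact_mod_cast this
  rw [← hs2] at *
  field_simp
  ring
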